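/- Suppose 𝒜 = {0, 1, …, ε} ∪ {p₁, …, p_l} ∪ {α − 1, α}, where ε ≥ 1 and ε + 2 ≤ p₁ < ⋯ < p_l ≤ α − ε. Then reg(𝒜) ≥ r(𝒜) ≥ ⌊(p₁ − 2)/ε⌋ + 1, where r(𝒜) := min{r ∈ ℕ : (r+1)𝒜 = {0, α} + r𝒜} and reg(𝒜) := min{m ≥ 1 : m𝒜 is full}. -/
import Mathlib


open scoped Pointwise

/-- The `m`-fold sumset of a finite set `A ⊆ ℕ`, with `0 • A = {0}`. -/
def sumset (A : Finset ℕ) : ℕ → Finset ℕ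
  | 0 => {0}
  | m + 1 => sumset A m + A

/-- A subset of `ℕ` is full iff it equals `{0, 1, …, n}` for some `n`. -/
def IsFull (B : Finset ℕ) : Prop := ∃ n : ℕ, B = Finset.Iic n

/-- `{i, …, j}` is a gap of `B`: disjoint from `B`, with `i - 1 ∈ B` and `j + 1 ∈ B`. -/
def IsGap (B : Finset ℕ) (i j : ℕ) : Prop :=
  1 ≤ i ∧ i ≤ j ∧ (∀ k, i ≤ k → k ≤ j → k ∉ B) ∧ i - 1 ∈ B ∧ j + 1 ∈ B

/-- `λ(B)`: the maximal length of a gap of `B` (`0` if there are no gaps). -/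
noncomputable def gapLen (B : Finset ℕ) : ℕ :=
  sSup {n | ∃ i j, IsGap B i j ∧ n = j - i + 1}

/-- Property `(P₁)`. -/
def P1 (A : Finset ℕ) (α : ℕ) : Prop :=
  ∀ m : ℕ, ¬ IsFull (sumset A m) → ¬ IsFull (sumset A m + ({0, α} : Finset ℕ))

/-- Property `(P₂)`. -/
def P2 (A : Finset ℕ) (α : ℕ) : Prop :=
  ∀ m : ℕ, ¬ IsFull (sumset A m) →
    ¬ ((∀ k, k ≤ α → k ∈ sumset A m) ∧
       (∀ k, (m - 1) * α ≤ k → k ≤ m * α → k ∈ sumset A m))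

/-- The combinatorial reduction number `r(𝒜)`. -/
noncomputable def rA (A : Finset ℕ) (α : ℕ) : ℕ :=
  sInf {r : ℕ | sumset A (r + 1) = ({0, α} : Finset ℕ) + sumset A r}

/-- The combinatorial regularity `reg(𝒜)`. -/
noncomputable def regA (A : Finset ℕ) : ℕ :=
  sInf {m : ℕ | 1 ≤ m ∧ IsFull (sumset A m)}

lemma sumset_succ (A : Finset ℕ) (m : ℕ) : sumset A (m+1) = sumset A m + A := rfl

lemma zero_mem_sumset {A : Finset ℕ} (h0 : 0 ∈ A) : ∀ m, (0:ℕ) ∈ sumset A m := by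
  intro m
  induction m with
  | zero => simp [sumset]
  | succ m ih =>
    rw [sumset_succ, Finset.mem_add]
    exact ⟨0, ih, 0, h0, rfl⟩

lemma add_mem_sumset {A : Finset ℕ} {m : ℕ} {x : ℕ} (hx : x ∈ sumset A m) :
    ∀ n {y : ℕ}, y ∈ sumset A n → x + y ∈ sumset A (m + n) := by
  intro n
  induction n with
  | zero => intro y hy; simp [sumset] at hy; subst hy; simpa using hx
  | succ n ih =>
    intro y hy
    rw [sumset_succ, Finset.mem_add] at hy
    obtain ⟨b, hb, c, hc, rfl⟩ := hy
    rw [show m + (n+1) = (m+n)+1 by ring, sumset_succ, Finset.mem_add]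
    exact ⟨x + b, ih hb, c, hc, by ring⟩

lemma nsmul_mem_sumset {A : Finset ℕ} {u : ℕ} (hu : u ∈ A) : ∀ a, a * u ∈ sumset A a := by
  intro a
  induction a with
  | zero => simp [sumset]
  | succ a ih =>
    rw [sumset_succ, Finset.mem_add]
    exact ⟨a*u, ih, u, hu, by ring⟩

lemma sumset_mono {A : Finset ℕ} (h0 : 0 ∈ A) {m n : ℕ} (h : m ≤ n) :
    sumset A m ⊆ sumset A n := by
  intro x hx
  obtain ⟨k, rfl⟩ := Nat.exists_eq_add_of_le h
  simpa using add_mem_sumset hx k (zero_mem_sumset h0 k)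

lemma sumset_le {A : Finset ℕ} {α : ℕ} (hub : ∀ a ∈ A, a ≤ α) :
    ∀ m {x : ℕ}, x ∈ sumset A m → x ≤ m * α := by
  intro m
  induction m with
  | zero => intro x hx; simp [sumset] at hx; omega
  | succ m ih =>
    intro x hx
    rw [sumset_succ, Finset.mem_add] at hx
    obtain ⟨b, hb, c, hc, rfl⟩ := hx
    have h1 := ih hb
    have h2 := hub c hc
    have : (m+1)*α = m*α + α := by ring
    omega

lemma fill_mem_sumset {A : Finset ℕ} {ε : ℕ} (hsub : Finset.Iic ε ⊆ A) :
    ∀ m {k : ℕ}, k ≤ m * ε → k ∈ sumset A m := by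
  intro m
  induction m with
  | zero => intro k hk; simp at hk; simp [sumset, hk]
  | succ m ih =>
    intro k hk
    rw [sumset_succ, Finset.mem_add]
    by_cases h : k ≤ ε
    · exact ⟨0, ih (Nat.zero_le _), k, hsub (Finset.mem_Iic.2 h), by omega⟩
    · have hk' : (m+1)*ε = m*ε + ε := by ring
      exact ⟨k - ε, ih (by omega), ε, hsub (Finset.mem_Iic.2 le_rfl), by omega⟩

lemma sumset_small_or_large {A : Finset ℕ} {ε p : ℕ} (h : ∀ a ∈ A, a ≤ ε ∨ p ≤ a) :
    ∀ r {x : ℕ}, x ∈ sumset A r → x ≤ r * ε ∨ p ≤ x := by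
  intro r
  induction r with
  | zero => intro x hx; simp [sumset] at hx; omega
  | succ r ih =>
    intro x hx
    rw [sumset_succ, Finset.mem_add] at hx
    obtain ⟨b, hb, c, hc, rfl⟩ := hx
    have hr : (r+1)*ε = r*ε + ε := by ring
    rcases ih hb with h1 | h1
    · rcases h c hc with h2 | h2
      · left; omega
      · right; omega
    · right; omega

lemma sumset_full {A : Finset ℕ} {α : ℕ} (h0 : 0 ∈ A) (h1 : 1 ∈ A)
    (hα1 : α - 1 ∈ A) (hα : α ∈ A) (hub : ∀ a ∈ A, a ≤ α) (h2 : 2 ≤ α) :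
    sumset A α = Finset.Iic (α * α) := by
  apply Finset.Subset.antisymm
  · intro x hx; exact Finset.mem_Iic.2 (sumset_le hub α hx)
  · intro k hk
    rw [Finset.mem_Iic] at hk
    obtain ⟨β, rfl⟩ : ∃ β, α = β + 1 := ⟨α - 1, by omega⟩
    have hβ : (β + 1) - 1 = β := by omega
    rw [hβ] at hα1
    obtain ⟨a, r, hk', hrlt⟩ : ∃ a r, a * (β+1) + r = k ∧ r < β+1 :=
      ⟨k / (β+1), k % (β+1), by rw [Nat.mul_comm]; exact Nat.div_add_mod k (β+1),
        Nat.mod_lt _ (by omega)⟩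
    have haα : a ≤ β+1 := by
      by_contra h
      push_neg at h
      have h4 : (β+2) * (β+1) ≤ a * (β+1) := Nat.mul_le_mul_right _ (by omega)
      have h5 : (β+2)*(β+1) = (β+1)*(β+1) + (β+1) := by ring
      omega
    by_cases hc : a + r ≤ β+1
    · have hm : a * (β+1) + r * 1 ∈ sumset A (a + r) :=
        add_mem_sumset (nsmul_mem_sumset hα a) r (nsmul_mem_sumset h1 r)
      have h6 := sumset_mono h0 hc hm
      rwa [show a*(β+1)+r*1 = k by omega] at h6
    · have ha' : a ≤ β := by
        by_contra h
        have h7 : a = β+1 := by omega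
        rw [h7] at hk'
        omega
      have key : (a + 1 - (β+1-r)) * (β+1) + (β+1-r) * β = k := by
        have h7 : (β+1-r) * β + (β+1-r) = (β+1-r)*(β+1) := by ring
        have h8 : (a+1-(β+1-r)) * (β+1) + (β+1-r) * (β+1) = (a+1)*(β+1) := by
          rw [← Nat.add_mul]; congr 1; omega
        have h9 : (a+1)*(β+1) = a*(β+1) + (β+1) := by ring
        omega
      have hm : (a + 1 - (β+1-r)) * (β+1) + (β+1-r) * β
          ∈ sumset A ((a+1-(β+1-r)) + (β+1-r)) :=
        add_mem_sumset (nsmul_mem_sumset hα _) _ (nsmul_mem_sumset hα1 _)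
      rw [key] at hm
      exact sumset_mono h0 (by omega) hm

/-- If `𝒜 = {0,…,ε} ∪ {p₁,…,p_l} ∪ {α−1, α}` with `ε ≥ 1` and
`ε + 2 ≤ p₁ < ⋯ < p_l ≤ α − ε`, then `reg(𝒜) ≥ r(𝒜) ≥ ⌊(p₁ − 2)/ε⌋ + 1`. -/
theorem stmt_18 (𝒜 P : Finset ℕ) (ε α : ℕ) (hPne : P.Nonempty) (hε : 1 ≤ ε)
    (h𝒜 : 𝒜 = Finset.Iic ε ∪ P ∪ {α - 1, α})
    (hP : ∀ q ∈ P, ε + 2 ≤ q ∧ q ≤ α - ε) :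
    regA 𝒜 ≥ rA 𝒜 α ∧ rA 𝒜 α ≥ (P.min' hPne - 2) / ε + 1 := by
  have hpP : P.min' hPne ∈ P := P.min'_mem hPne
  obtain ⟨hp1, hp2⟩ := hP _ hpP
  have hα2 : 2*ε + 2 ≤ α := by omega
  have h0 : (0:ℕ) ∈ 𝒜 := by
    rw [h𝒜]; exact Finset.mem_union_left _ (Finset.mem_union_left _ (by simp))
  have h1 : (1:ℕ) ∈ 𝒜 := by
    rw [h𝒜]; exact Finset.mem_union_left _ (Finset.mem_union_left _ (by simpa using hε))
  have hαm : α ∈ 𝒜 := by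
    rw [h𝒜]; exact Finset.mem_union_right _ (by simp)
  have hα1m : α - 1 ∈ 𝒜 := by
    rw [h𝒜]; exact Finset.mem_union_right _ (by simp)
  have hsub : Finset.Iic ε ⊆ 𝒜 := by
    rw [h𝒜]; intro x hx; exact Finset.mem_union_left _ (Finset.mem_union_left _ hx)
  have hub : ∀ a ∈ 𝒜, a ≤ α := by
    intro a ha
    rw [h𝒜] at ha
    simp only [Finset.mem_union, Finset.mem_Iic, Finset.mem_insert, Finset.mem_singleton] at ha
    rcases ha with (h | h) | (h | h)
    · omega
    · have := (hP a h).2; omega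
    · omega
    · omega
  have hsplit : ∀ a ∈ 𝒜, a ≤ ε ∨ P.min' hPne ≤ a := by
    intro a ha
    rw [h𝒜] at ha
    simp only [Finset.mem_union, Finset.mem_Iic, Finset.mem_insert, Finset.mem_singleton] at ha
    rcases ha with (h | h) | (h | h)
    · left; omega
    · right; exact P.min'_le a h
    · right; omega
    · right; omega
  -- step lemma
  have hstep : ∀ m, 1 ≤ m → IsFull (sumset 𝒜 m) →
      sumset 𝒜 (m+1) = ({0, α} : Finset ℕ) + sumset 𝒜 m := by
    rintro m hm ⟨n, hn⟩
    have hn' : n = m * α := by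
      have ha1 : m * α ∈ sumset 𝒜 m := nsmul_mem_sumset hαm m
      rw [hn, Finset.mem_Iic] at ha1
      have ha2 : n ∈ sumset 𝒜 m := by rw [hn]; exact Finset.mem_Iic.2 le_rfl
      have := sumset_le hub m ha2
      omega
    subst hn'
    have hmα : 1*α ≤ m*α := Nat.mul_le_mul_right α hm
    apply Finset.Subset.antisymm
    · intro x hx
      rw [sumset_succ, Finset.mem_add] at hx
      obtain ⟨b, hb, c, hc, rfl⟩ := hx
      rw [hn, Finset.mem_Iic] at hb
      have hcα := hub c hc
      rw [Finset.mem_add]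
      by_cases hbc : b + c ≤ m * α
      · exact ⟨0, by simp, b + c, by rw [hn]; exact Finset.mem_Iic.2 hbc, by ring⟩
      · refine ⟨α, by simp, b + c - α, ?_, by omega⟩
        rw [hn, Finset.mem_Iic]; omega
    · intro x hx
      rw [Finset.mem_add] at hx
      obtain ⟨b, hb, c, hc, rfl⟩ := hx
      have hb𝒜 : b ∈ 𝒜 := by
        simp only [Finset.mem_insert, Finset.mem_singleton] at hb
        rcases hb with rfl | rfl
        exacts [h0, hαm]
      rw [sumset_succ, add_comm b c]
      exact Finset.add_mem_add hc hb𝒜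
  have hfull : IsFull (sumset 𝒜 α) :=
    ⟨α*α, sumset_full h0 h1 hα1m hαm hub (by omega)⟩
  have hSne : {m : ℕ | 1 ≤ m ∧ IsFull (sumset 𝒜 m)}.Nonempty := ⟨α, by omega, hfull⟩
  have hreg : regA 𝒜 ∈ {m : ℕ | 1 ≤ m ∧ IsFull (sumset 𝒜 m)} := Nat.sInf_mem hSne
  have hT : regA 𝒜 ∈ {r : ℕ | sumset 𝒜 (r+1) = ({0, α} : Finset ℕ) + sumset 𝒜 r} :=
    hstep _ hreg.1 hreg.2
  have h₁ : rA 𝒜 α ≤ regA 𝒜 := Nat.sInf_le hT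
  refine ⟨h₁, ?_⟩
  have hrmem : sumset 𝒜 (rA 𝒜 α + 1) = ({0, α} : Finset ℕ) + sumset 𝒜 (rA 𝒜 α) :=
    Nat.sInf_mem (⟨regA 𝒜, hT⟩ : {r : ℕ | sumset 𝒜 (r+1) = ({0, α} : Finset ℕ) + sumset 𝒜 r}.Nonempty)
  by_contra hlt
  push_neg at hlt
  set r := rA 𝒜 α with hrdef
  have hrle : r ≤ (P.min' hPne - 2) / ε := by omega
  have hrε : r * ε ≤ P.min' hPne - 2 :=
    le_trans (Nat.mul_le_mul_right ε hrle) (Nat.div_mul_le_self _ _)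
  have hx1 : r*ε + 1 ∈ sumset 𝒜 (r+1) := by
    apply fill_mem_sumset hsub
    have : (r+1)*ε = r*ε + ε := by ring
    omega
  rw [hrmem, Finset.mem_add] at hx1
  obtain ⟨b, hb, c, hc, hbc⟩ := hx1
  have hc' := sumset_small_or_large hsplit r hc
  simp only [Finset.mem_insert, Finset.mem_singleton] at hb
  rcases hb with rfl | rfl
  · omega
  · omega
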